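/- Let (fₙ) be a sequence of functions from a metric space X to a normed space E that are pairwise disjoint (for each x ∈ X and m ≠ n, fₘ(x) = 0 or fₙ(x) = 0). Suppose there is a function σ : [0,∞) → [0,∞] with ω_{fₙ} ≤ σ for all n, and suppose the pointwise sum f(x) = Σₙ fₙ(x) is well-defined (for each x, at most one term is nonzero, or the sum converges). Then ω_f ≤ 2σ. -/

import Mathlib

/-! At each point at most one `fₙ` is nonzero, so `f x - f y = fₙ x - fₘ y`; when `n ≠ m` this
splits as `(fₙ x - fₙ y) + (fₘ x - fₘ y)` because `fₙ y = fₘ x = 0`, and each summand is bounded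
by `σ ε`. -/

open ENNReal

/-- Modulus of continuity: ω_f(ε) = sup{‖f x₁ - f x₂‖ : dist x₁ x₂ ≤ ε}, valued in [0,∞]. -/
noncomputable def modulus {X E : Type*} [PseudoMetricSpace X] [NormedAddCommGroup E]
    (f : X → E) (ε : ℝ) : ℝ≥0∞ :=
  ⨆ (p : X × X) (_ : dist p.1 p.2 ≤ ε), (‖f p.1 - f p.2‖₊ : ℝ≥0∞)

section Modulus

variable {X E : Type*} [PseudoMetricSpace X] [NormedAddCommGroup E]

theorem nnnorm_sub_le_modulus (f : X → E) {ε : ℝ} {x y : X} (h : dist x y ≤ ε) :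
    (‖f x - f y‖₊ : ℝ≥0∞) ≤ modulus f ε :=
  le_iSup₂ (f := fun (p : X × X) (_ : dist p.1 p.2 ≤ ε) => (‖f p.1 - f p.2‖₊ : ℝ≥0∞)) (x, y) h

theorem modulus_le_of_forall {f : X → E} {ε : ℝ} {c : ℝ≥0∞}
    (h : ∀ x y, dist x y ≤ ε → (‖f x - f y‖₊ : ℝ≥0∞) ≤ c) : modulus f ε ≤ c :=
  iSup₂_le fun p hp => h p.1 p.2 hp

end Modulus

theorem exists_hasSum_eq_of_pairwise_eq_zero_or_eq_zero {ι M : Type*} [Nonempty ι]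
    [AddCommMonoid M] [TopologicalSpace M] [T2Space M] {g : ι → M} {a : M}
    (hg : ∀ m n, m ≠ n → g m = 0 ∨ g n = 0) (ha : HasSum g a) :
    ∃ n, a = g n ∧ ∀ m, m ≠ n → g m = 0 := by
  have hsingle : ∃ n, ∀ m, m ≠ n → g m = 0 := by
    by_cases h : ∃ n, g n ≠ 0
    · obtain ⟨n, hn⟩ := h
      exact ⟨n, fun m hmn => (hg m n hmn).resolve_right hn⟩
    · push Not at h
      exact ⟨Classical.arbitrary ι, fun m _ => h m⟩
  obtain ⟨n, hn⟩ := hsingle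
  exact ⟨n, ha.unique (hasSum_single n hn), hn⟩

theorem nnnorm_sub_le_add_of_eq_zero {ι α E : Type*} [NormedAddCommGroup E] {g : ι → α → E}
    {x y : α} {n m : ι} (hx : ∀ k, k ≠ n → g k x = 0) (hy : ∀ k, k ≠ m → g k y = 0) :
    ‖g n x - g m y‖₊ ≤ ‖g n x - g n y‖₊ + ‖g m x - g m y‖₊ := by
  by_cases hnm : n = m
  · subst hnm
    exact le_add_of_nonneg_right zero_le
  · have hsplit : g n x - g m y = (g n x - g n y) + (g m x - g m y) := by
      rw [hy n hnm, hx m (Ne.symm hnm)]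
      abel
    rw [hsplit]
    exact nnnorm_add_le _ _

theorem stmt4 {X E : Type*} [MetricSpace X] [NormedAddCommGroup E]
    (fN : ℕ → X → E)
    (hdisj : ∀ x : X, ∀ m n : ℕ, m ≠ n → fN m x = 0 ∨ fN n x = 0)
    (σ : ℝ → ℝ≥0∞) (hσ : ∀ n ε, modulus (fN n) ε ≤ σ ε)
    (f : X → E) (hf : ∀ x, HasSum (fun n => fN n x) (f x)) :
    ∀ ε : ℝ, modulus f ε ≤ 2 * σ ε := by
  intro ε
  refine modulus_le_of_forall fun x y hxy => ?_
  obtain ⟨n, hfx, hx⟩ := exists_hasSum_eq_of_pairwise_eq_zero_or_eq_zero (hdisj x) (hf x)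
  obtain ⟨m, hfy, hy⟩ := exists_hasSum_eq_of_pairwise_eq_zero_or_eq_zero (hdisj y) (hf y)
  have hbound : ∀ k, (‖fN k x - fN k y‖₊ : ℝ≥0∞) ≤ σ ε := fun k =>
    (nnnorm_sub_le_modulus (fN k) hxy).trans (hσ k ε)
  calc (‖f x - f y‖₊ : ℝ≥0∞)
      ≤ (‖fN n x - fN n y‖₊ : ℝ≥0∞) + ‖fN m x - fN m y‖₊ := by
        rw [hfx, hfy]
        exact_mod_cast nnnorm_sub_le_add_of_eq_zero hx hy
    _ ≤ σ ε + σ ε := add_le_add (hbound n) (hbound m)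
    _ = 2 * σ ε := (two_mul _).symm
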